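/- arXiv:1501.03203 — 2 statements merged into one kernel-verified Lean document; each statement's English description precedes it below -/
import Mathlib

section
/- Discrete Hamilton principle (one degree of freedom): Let N ≥ 2, h > 0, and H : ℝ × ℝ → ℝ be differentiable. Define the discrete action L(Q,P) = ∑_{k=0}^{N−1} [ P(k)·(Q(k+1)−Q(k))/h − H(Q(k),P(k)) ]·h for Q,P : {0,...,N} → ℝ. Then (Q,P) is a critical point of L with respect to variations (U,V) vanishing at k=0 and k=N (i.e., the directional derivative of L at (Q,P) in every such direction (U,V) is zero) if and only if for all k with 1 ≤ k ≤ N−1: (Q(k+1)−Q(k))/h = ∂H/∂p (Q(k),P(k)) and (P(k)−P(k−1))/h = −∂H/∂q (Q(k),P(k)). -/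
/-!
The first variation of the discrete action along (U, V) is, after a summation by parts that moves
the forward difference of U onto a backward difference of P (the boundary terms vanish because
U 0 = U N = 0), equal to
  h * ∑ₖ (V k * [(ΔQ)ₖ / h - ∂ₚH] - U k * [(∇P)ₖ / h + ∂_qH]).
Testing against variations concentrated at a single interior node k (a discrete fundamental lemma of
the calculus of variations) shows that it vanishes for all admissible (U, V) exactly when both
brackets vanish at every interior node.
-/

open Finset

section Partials

variable {H : ℝ × ℝ → ℝ} {q p : ℝ}

theorem DifferentiableAt.fderiv_apply_eq_partials (hH : DifferentiableAt ℝ H (q, p)) (u v : ℝ) :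
    fderiv ℝ H (q, p) (u, v) =
      u * deriv (fun x => H (x, p)) q + v * deriv (fun y => H (q, y)) p := by
  have hq : deriv (fun x => H (x, p)) q = fderiv ℝ H (q, p) (1, 0) :=
    (hH.hasFDerivAt.comp_hasDerivAt q ((hasDerivAt_id q).prodMk (hasDerivAt_const q p))).deriv
  have hp : deriv (fun y => H (q, y)) p = fderiv ℝ H (q, p) (0, 1) :=
    (hH.hasFDerivAt.comp_hasDerivAt p ((hasDerivAt_const p q).prodMk (hasDerivAt_id p))).deriv
  have huv : ((u, v) : ℝ × ℝ) = u • ((1 : ℝ), (0 : ℝ)) + v • ((0 : ℝ), (1 : ℝ)) := by simp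
  rw [hq, hp, huv, map_add, map_smul, map_smul, smul_eq_mul, smul_eq_mul]

theorem DifferentiableAt.hasDerivAt_comp_add_mul (hH : DifferentiableAt ℝ H (q, p)) (u v : ℝ) :
    HasDerivAt (fun ε => H (q + ε * u, p + ε * v))
      (u * deriv (fun x => H (x, p)) q + v * deriv (fun y => H (q, y)) p) 0 := by
  have hline : HasDerivAt (fun ε : ℝ => (q + ε * u, p + ε * v)) (u, v) 0 :=
    (((hasDerivAt_id 0).mul_const u).const_add q).prodMk
      (((hasDerivAt_id 0).mul_const v).const_add p) |>.congr_deriv (by simp)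
  rw [← hH.fderiv_apply_eq_partials]
  exact (by simpa using hH.hasFDerivAt : HasFDerivAt H _ (q + 0 * u, p + 0 * v)).comp_hasDerivAt
    0 hline

end Partials

section SummationByParts

variable {R : Type*}

/-- At `k = 0` the truncated `k - 1` makes `f (k - 1)` a junk value, harmless since `g 0 = 0`. -/
theorem Finset.sum_range_mul_sub_eq_neg_sum_sub_mul [CommRing R] {f g : ℕ → R} {N : ℕ}
    (h0 : g 0 = 0) (hN : g N = 0) :
    ∑ k ∈ range N, f k * (g (k + 1) - g k) = -∑ k ∈ range N, (f k - f (k - 1)) * g k := by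
  have hshift : ∑ k ∈ range N, f k * g (k + 1) = ∑ k ∈ range N, f (k - 1) * g k := by
    have := sum_range_succ' (fun k => f (k - 1) * g k) N
    rw [sum_range_succ, hN, h0] at this
    simpa using this.symm
  simp only [mul_sub, sub_mul, sum_sub_distrib, hshift]
  ring

theorem forall_sum_mul_eq_zero_iff [Semiring R] {N : ℕ} {a : ℕ → R} :
    (∀ U : ℕ → R, U 0 = 0 → U N = 0 → ∑ k ∈ range N, U k * a k = 0) ↔
      ∀ k, 1 ≤ k → k ≤ N - 1 → a k = 0 := by
  constructor
  · intro hcrit k hk1 hkN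
    have hsingle := hcrit (Pi.single k 1) (Pi.single_eq_of_ne (by omega) 1)
      (Pi.single_eq_of_ne (by omega) 1)
    rwa [sum_eq_single_of_mem k (mem_range.2 (by omega)) (fun j _ hj => by simp [hj]),
      Pi.single_eq_same, one_mul] at hsingle
  · intro ha U hU0 _
    refine sum_eq_zero fun k hk => ?_
    obtain rfl | hk0 := Nat.eq_zero_or_pos k
    · rw [hU0, zero_mul]
    · rw [ha k hk0 (by have := mem_range.1 hk; omega), mul_zero]

theorem forall_sum_mul_sub_mul_eq_zero_iff [Ring R] {N : ℕ} {a b : ℕ → R} :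
    (∀ U V : ℕ → R, U 0 = 0 → U N = 0 → V 0 = 0 → V N = 0 →
      ∑ k ∈ range N, (V k * a k - U k * b k) = 0) ↔
      ∀ k, 1 ≤ k → k ≤ N - 1 → a k = 0 ∧ b k = 0 := by
  simp only [sum_sub_distrib, forall_and, ← forall_sum_mul_eq_zero_iff]
  constructor
  · intro hcrit
    exact ⟨fun V hV0 hVN => by simpa using hcrit 0 V rfl rfl hV0 hVN,
      fun U hU0 hUN => by simpa using hcrit U 0 hU0 hUN rfl rfl⟩
  · rintro ⟨ha, hb⟩ U V hU0 hUN hV0 hVN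
    rw [ha V hV0 hVN, hb U hU0 hUN, sub_zero]

end SummationByParts

noncomputable def discreteAction (N : ℕ) (h : ℝ) (H : ℝ × ℝ → ℝ) (Q P : ℕ → ℝ) : ℝ :=
  ∑ k ∈ range N, (P k * (Q (k + 1) - Q k) / h - H (Q k, P k)) * h

noncomputable def forwardResidual (h : ℝ) (H : ℝ × ℝ → ℝ) (Q P : ℕ → ℝ) (k : ℕ) : ℝ :=
  (Q (k + 1) - Q k) / h - deriv (fun p => H (Q k, p)) (P k)

noncomputable def backwardResidual (h : ℝ) (H : ℝ × ℝ → ℝ) (Q P : ℕ → ℝ) (k : ℕ) : ℝ :=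
  (P k - P (k - 1)) / h + deriv (fun q => H (q, P k)) (Q k)

section FirstVariation

variable {N : ℕ} {h : ℝ} {H : ℝ × ℝ → ℝ} {Q P U V : ℕ → ℝ}

theorem hasDerivAt_discreteAction_add_smul (hh : h ≠ 0) (hH : Differentiable ℝ H) :
    HasDerivAt (fun ε : ℝ => discreteAction N h H (Q + ε • U) (P + ε • V))
      (∑ k ∈ range N, (V k * (Q (k + 1) - Q k) + P k * (U (k + 1) - U k)
        - h * (U k * deriv (fun x => H (x, P k)) (Q k)
          + V k * deriv (fun y => H (Q k, y)) (P k)))) 0 := by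
  refine HasDerivAt.fun_sum fun k _ => ?_
  have hline (x w : ℕ → ℝ) (j : ℕ) : HasDerivAt (fun ε : ℝ => x j + ε * w j) (w j) 0 := by
    simpa using ((hasDerivAt_id (0 : ℝ)).mul_const (w j)).const_add (x j)
  have hterm := ((((hline P V k).mul ((hline Q U (k + 1)).sub (hline Q U k))).div_const h).sub
    ((hH (Q k, P k)).hasDerivAt_comp_add_mul (U k) (V k))).mul_const h
  refine hterm.congr_deriv ?_
  simp only [Pi.sub_apply, zero_mul, add_zero]
  field_simp

theorem deriv_discreteAction_add_smul (hh : h ≠ 0) (hH : Differentiable ℝ H)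
    (hU0 : U 0 = 0) (hUN : U N = 0) :
    deriv (fun ε : ℝ => discreteAction N h H (Q + ε • U) (P + ε • V)) 0 =
      h * ∑ k ∈ range N,
        (V k * forwardResidual h H Q P k - U k * backwardResidual h H Q P k) := by
  have hparts := sum_range_mul_sub_eq_neg_sum_sub_mul (f := P) hU0 hUN
  rw [(hasDerivAt_discreteAction_add_smul hh hH).deriv]
  calc _ = ∑ k ∈ range N, (V k * (Q (k + 1) - Q k) - h * (U k * deriv (fun x => H (x, P k)) (Q k)
          + V k * deriv (fun y => H (Q k, y)) (P k)))
        + ∑ k ∈ range N, P k * (U (k + 1) - U k) := by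
        rw [← sum_add_distrib]
        exact sum_congr rfl fun k _ => by ring
    _ = _ := by
        rw [hparts, ← sub_eq_add_neg, ← sum_sub_distrib, mul_sum]
        refine sum_congr rfl fun k _ => ?_
        rw [forwardResidual, backwardResidual]
        field_simp
        ring

end FirstVariation

theorem discrete_hamilton_principle_general (N : ℕ) (h : ℝ) (hh : 0 < h)
    (H : ℝ × ℝ → ℝ) (hH : Differentiable ℝ H) (Q P : ℕ → ℝ) :
    (∀ U V : ℕ → ℝ, U 0 = 0 → U N = 0 → V 0 = 0 → V N = 0 →
      deriv (fun ε : ℝ => ∑ k ∈ Finset.range N,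
        ((P k + ε * V k) * ((Q (k + 1) + ε * U (k + 1)) - (Q k + ε * U k)) / h
          - H (Q k + ε * U k, P k + ε * V k)) * h) 0 = 0)
    ↔ (∀ k, 1 ≤ k → k ≤ N - 1 →
        (Q (k + 1) - Q k) / h = deriv (fun p => H (Q k, p)) (P k) ∧
        (P k - P (k - 1)) / h = - deriv (fun q => H (q, P k)) (Q k)) := by
  calc (∀ U V : ℕ → ℝ, U 0 = 0 → U N = 0 → V 0 = 0 → V N = 0 →
        deriv (fun ε : ℝ => discreteAction N h H (Q + ε • U) (P + ε • V)) 0 = 0)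
      ↔ ∀ U V : ℕ → ℝ, U 0 = 0 → U N = 0 → V 0 = 0 → V N = 0 →
        ∑ k ∈ range N,
          (V k * forwardResidual h H Q P k - U k * backwardResidual h H Q P k) = 0 :=
        forall₄_congr fun _ _ hU0 hUN => by
          rw [deriv_discreteAction_add_smul hh.ne' hH hU0 hUN, mul_eq_zero, or_iff_right hh.ne']
    _ ↔ ∀ k, 1 ≤ k → k ≤ N - 1 →
        forwardResidual h H Q P k = 0 ∧ backwardResidual h H Q P k = 0 :=
        forall_sum_mul_sub_mul_eq_zero_iff
    _ ↔ _ := by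
        simp only [forwardResidual, backwardResidual, sub_eq_zero, add_eq_zero_iff_eq_neg]

/-- Discrete Hamilton principle (one degree of freedom): criticality of the
discrete action with respect to variations vanishing at the endpoints is
equivalent to the discrete Hamilton equations (forward difference in `Q`,
backward difference in `P`). -/
theorem discrete_hamilton_principle (N : ℕ) (hN : 2 ≤ N) (h : ℝ) (hh : 0 < h)
    (H : ℝ × ℝ → ℝ) (hH : Differentiable ℝ H) (Q P : ℕ → ℝ) :
    (∀ U V : ℕ → ℝ, U 0 = 0 → U N = 0 → V 0 = 0 → V N = 0 →
      deriv (fun ε : ℝ => ∑ k ∈ Finset.range N,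
        ((P k + ε * V k) * ((Q (k + 1) + ε * U (k + 1)) - (Q k + ε * U k)) / h
          - H (Q k + ε * U k, P k + ε * V k)) * h) 0 = 0)
    ↔ (∀ k, 1 ≤ k → k ≤ N - 1 →
        (Q (k + 1) - Q k) / h = deriv (fun p => H (Q k, p)) (P k) ∧
        (P k - P (k - 1)) / h = - deriv (fun q => H (q, P k)) (Q k)) :=
  discrete_hamilton_principle_general N h hh H hH Q P
end

section
/- Key identity in the Helmholtz reconstruction: Let X_q, X_p : ℝ^d × ℝ^d → ℝ^d be C¹ and satisfy the symmetry conditions (i) D_q X_q + (D_p X_p)ᵀ = 0, (ii) D_p X_q symmetric, (iii) D_q X_p symmetric. Then for all (q,p) and all (u,v) ∈ ℝ^d × ℝ^d, the directional derivative of H(q,p) = ∫_0^1 [⟨p, X_q(λq,λp)⟩ − ⟨q, X_p(λq,λp)⟩] dλ along (u,v) equals ⟨v, X_q(q,p)⟩ − ⟨u, X_p(q,p)⟩, because the integrand's derivative equals d/dλ [ λ⟨v, X_q(λq,λp)⟩ − λ⟨u, X_p(λq,λp)⟩ ]. -/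
open scoped RealInnerProductSpace

/-!
The integrand of `H` is `α (λ • z) z` for the one-form `α y w = ⟪Xq y, w.2⟫ - ⟪Xp y, w.1⟫`
on `E × E`, and the three symmetry conditions say precisely that `α` is closed: `Dα(y) v w` is
symmetric in `v` and `w`. For a closed one-form, `H` is the radial (Poincaré) potential: after
differentiating under the integral sign, closedness turns the `t`-derivative of
`α (λ • (z + t • w)) (z + t • w)` at `t = 0` into `d/dλ [α (λ • z) (λ • w)]`, whose integral over
`[0, 1]` is `α z w`.
-/

section ParametricIntegral

variable {E : Type*} [NormedAddCommGroup E] [NormedSpace ℝ E]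

theorem hasDerivAt_intervalIntegral_of_continuous {F F' : ℝ → ℝ → E}
    (hF : Continuous (Function.uncurry F)) (hF' : Continuous (Function.uncurry F'))
    (hderiv : ∀ t l, HasDerivAt (fun s => F s l) (F' t l) t) (a b t₀ : ℝ) :
    HasDerivAt (fun t => ∫ l in a..b, F t l) (∫ l in a..b, F' t₀ l) t₀ := by
  obtain ⟨C, hC⟩ :=
    ((isCompact_closedBall t₀ 1).prod isCompact_uIcc).exists_bound_of_continuousOn hF'.continuousOn
  refine (intervalIntegral.hasDerivAt_integral_of_dominated_loc_of_deriv_le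
    (bound := fun _ => C) (Metric.ball_mem_nhds t₀ one_pos)
    (.of_forall fun t => (hF.comp (Continuous.prodMk_right t)).aestronglyMeasurable)
    ((hF.comp (Continuous.prodMk_right t₀)).intervalIntegrable a b)
    (hF'.comp (Continuous.prodMk_right t₀)).aestronglyMeasurable
    (.of_forall fun l hl t ht =>
      hC (t, l) ⟨Metric.ball_subset_closedBall ht, Set.uIoc_subset_uIcc hl⟩)
    intervalIntegrable_const
    (.of_forall fun l _ t _ => hderiv t l)).2

theorem hasDerivAt_intervalIntegral_of_contDiff {F : ℝ → ℝ → E}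
    (hF : ContDiff ℝ 1 (Function.uncurry F)) (a b t₀ : ℝ) :
    HasDerivAt (fun t => ∫ l in a..b, F t l) (∫ l in a..b, deriv (fun t => F t l) t₀) t₀ := by
  have hderiv : ∀ t l, HasDerivAt (fun s => F s l)
      (fderiv ℝ (Function.uncurry F) (t, l) (1, 0)) t := fun t l =>
    (hF.differentiable one_ne_zero (t, l)).hasFDerivAt.comp_hasDerivAt (f := fun s => (s, l)) t
      ((hasDerivAt_id t).prodMk (hasDerivAt_const t l))
  have hF' : Continuous (Function.uncurry fun t l => fderiv ℝ (Function.uncurry F) (t, l) (1, 0)) :=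
    (hF.continuous_fderiv one_ne_zero).clm_apply continuous_const
  simpa only [(hderiv t₀ _).deriv] using
    hasDerivAt_intervalIntegral_of_continuous hF.continuous hF' hderiv a b t₀

end ParametricIntegral

section Poincare

variable {V : Type*} [NormedAddCommGroup V] [NormedSpace ℝ V]

noncomputable def radialPotential (α : V → V →L[ℝ] ℝ) (z : V) : ℝ :=
  ∫ l in (0 : ℝ)..1, α (l • z) z

theorem hasDerivAt_radialPotential_add_smul {α : V → V →L[ℝ] ℝ} (hα : ContDiff ℝ 1 α)
    (hclosed : ∀ y v w, fderiv ℝ α y v w = fderiv ℝ α y w v) (z w : V) :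
    HasDerivAt (fun t : ℝ => radialPotential α (z + t • w)) (α z w) 0 := by
  have hdα : Differentiable ℝ α := hα.differentiable one_ne_zero
  have hF : ContDiff ℝ 1 (Function.uncurry fun t l : ℝ => α (l • (z + t • w)) (z + t • w)) := by
    fun_prop
  have hg : ContDiff ℝ 1 fun l : ℝ => α (l • z) (l • w) := by fun_prop
  have hderiv_eq : ∀ l : ℝ, deriv (fun t : ℝ => α (l • (z + t • w)) (z + t • w)) 0
      = deriv (fun l : ℝ => α (l • z) (l • w)) l := by
    intro l
    have hline : HasDerivAt (fun t : ℝ => z + t • w) w 0 := by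
      simpa using ((hasDerivAt_id (0 : ℝ)).smul_const w).const_add z
    have hray : ∀ v : V, HasDerivAt (fun l : ℝ => l • v) v l := fun v => by
      simpa using (hasDerivAt_id l).smul_const v
    have h₁ : HasDerivAt (fun t : ℝ => α (l • (z + t • w)) (z + t • w)) _ 0 :=
      ((hdα _).hasFDerivAt.comp_hasDerivAt 0 (hline.const_smul l)).clm_apply hline
    have h₂ : HasDerivAt (fun l : ℝ => α (l • z) (l • w)) _ l :=
      ((hdα _).hasFDerivAt.comp_hasDerivAt l (hray z)).clm_apply (hray w)
    rw [h₁.deriv, h₂.deriv, hclosed]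
    simp
  have := hasDerivAt_intervalIntegral_of_contDiff hF 0 1 0
  simpa only [radialPotential, hderiv_eq, one_smul, zero_smul, map_zero, sub_zero,
    intervalIntegral.integral_deriv_of_contDiffOn_Icc hg.contDiffOn zero_le_one] using this

end Poincare

theorem fderiv_apply_prod_eq_add {𝕜 E F G : Type*} [NontriviallyNormedField 𝕜]
    [NormedAddCommGroup E] [NormedSpace 𝕜 E] [NormedAddCommGroup F] [NormedSpace 𝕜 F]
    [NormedAddCommGroup G] [NormedSpace 𝕜 G] {f : E × F → G} {a : E} {b : F}
    (hf : DifferentiableAt 𝕜 f (a, b)) (x : E) (y : F) :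
    fderiv 𝕜 f (a, b) (x, y)
      = fderiv 𝕜 (fun x' => f (x', b)) a x + fderiv 𝕜 (fun y' => f (a, y')) b y := by
  have h₁ : HasFDerivAt (fun x' => f (x', b)) _ a :=
    hf.hasFDerivAt.comp a (hasFDerivAt_prodMk_left a b)
  have h₂ : HasFDerivAt (fun y' => f (a, y')) _ b :=
    hf.hasFDerivAt.comp b (hasFDerivAt_prodMk_right a b)
  rw [h₁.fderiv, h₂.fderiv, ContinuousLinearMap.comp_apply, ContinuousLinearMap.comp_apply,
    ← map_add]
  simp

section Symplectic

variable {E : Type*} [NormedAddCommGroup E] [InnerProductSpace ℝ E]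

noncomputable def symplecticOneForm (Xq Xp : E × E → E) (y : E × E) : E × E →L[ℝ] ℝ :=
  (innerSL ℝ (Xq y)).comp (ContinuousLinearMap.snd ℝ E E)
    - (innerSL ℝ (Xp y)).comp (ContinuousLinearMap.fst ℝ E E)

variable {Xq Xp : E × E → E}

theorem symplecticOneForm_apply (y w : E × E) :
    symplecticOneForm Xq Xp y w = ⟪Xq y, w.2⟫ - ⟪Xp y, w.1⟫ :=
  rfl

theorem contDiff_symplecticOneForm {n : WithTop ℕ∞} (hXq : ContDiff ℝ n Xq)
    (hXp : ContDiff ℝ n Xp) :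
    ContDiff ℝ n (symplecticOneForm Xq Xp) :=
  (((innerSL ℝ).contDiff.comp hXq).clm_comp contDiff_const).sub
    (((innerSL ℝ).contDiff.comp hXp).clm_comp contDiff_const)

theorem fderiv_symplecticOneForm_apply {y : E × E} (hXq : DifferentiableAt ℝ Xq y)
    (hXp : DifferentiableAt ℝ Xp y) (v w : E × E) :
    fderiv ℝ (symplecticOneForm Xq Xp) y v w
      = ⟪fderiv ℝ Xq y v, w.2⟫ - ⟪fderiv ℝ Xp y v, w.1⟫ := by
  have hq := ((innerSL ℝ).hasFDerivAt.comp y hXq.hasFDerivAt).clm_comp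
    (hasFDerivAt_const (ContinuousLinearMap.snd ℝ E E) y)
  have hp := ((innerSL ℝ).hasFDerivAt.comp y hXp.hasFDerivAt).clm_comp
    (hasFDerivAt_const (ContinuousLinearMap.fst ℝ E E) y)
  have h : HasFDerivAt (symplecticOneForm Xq Xp) _ y := hq.sub hp
  rw [h.fderiv]
  simp only [Function.comp_apply, ContinuousLinearMap.comp_zero, zero_add, sub_apply,
    ContinuousLinearMap.comp_apply, ContinuousLinearMap.flip_apply, ContinuousLinearMap.compL_apply,
    ContinuousLinearMap.coe_snd', ContinuousLinearMap.coe_fst']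
  rw [innerSL_apply_apply, innerSL_apply_apply]

theorem fderiv_symplecticOneForm_apply_comm {a b : E} (hXq : DifferentiableAt ℝ Xq (a, b))
    (hXp : DifferentiableAt ℝ Xp (a, b))
    (h1 : ∀ u v, ⟪fderiv ℝ (fun q' => Xq (q', b)) a u, v⟫
        + ⟪u, fderiv ℝ (fun p' => Xp (a, p')) b v⟫ = 0)
    (h2 : ∀ u v, ⟪fderiv ℝ (fun p' => Xq (a, p')) b u, v⟫
        = ⟪fderiv ℝ (fun p' => Xq (a, p')) b v, u⟫)
    (h3 : ∀ u v, ⟪fderiv ℝ (fun q' => Xp (q', b)) a u, v⟫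
        = ⟪fderiv ℝ (fun q' => Xp (q', b)) a v, u⟫) (v w : E × E) :
    fderiv ℝ (symplecticOneForm Xq Xp) (a, b) v w
      = fderiv ℝ (symplecticOneForm Xq Xp) (a, b) w v := by
  obtain ⟨v₁, v₂⟩ := v
  obtain ⟨w₁, w₂⟩ := w
  rw [fderiv_symplecticOneForm_apply hXq hXp, fderiv_symplecticOneForm_apply hXq hXp,
    fderiv_apply_prod_eq_add hXq, fderiv_apply_prod_eq_add hXq, fderiv_apply_prod_eq_add hXp,
    fderiv_apply_prod_eq_add hXp]
  simp only [inner_add_left]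
  linarith [h1 v₁ w₂, h1 w₁ v₂, h2 v₂ w₂, h3 v₁ w₁,
    real_inner_comm v₁ (fderiv ℝ (fun p' => Xp (a, p')) b w₂),
    real_inner_comm w₁ (fderiv ℝ (fun p' => Xp (a, p')) b v₂)]

end Symplectic

/-- Key identity in the Helmholtz reconstruction: the directional derivative
of `H` along `(u,v)` equals `⟪v, X_q(q,p)⟫ - ⟪u, X_p(q,p)⟫`. -/
theorem helmholtz_directional_derivative (d : ℕ)
    (Xq Xp : EuclideanSpace ℝ (Fin d) × EuclideanSpace ℝ (Fin d) → EuclideanSpace ℝ (Fin d))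
    (hXq : ContDiff ℝ 1 Xq) (hXp : ContDiff ℝ 1 Xp)
    (h1 : ∀ q p u v, ⟪fderiv ℝ (fun q' => Xq (q', p)) q u, v⟫
        + ⟪u, fderiv ℝ (fun p' => Xp (q, p')) p v⟫ = 0)
    (h2 : ∀ q p u v, ⟪fderiv ℝ (fun p' => Xq (q, p')) p u, v⟫
        = ⟪fderiv ℝ (fun p' => Xq (q, p')) p v, u⟫)
    (h3 : ∀ q p u v, ⟪fderiv ℝ (fun q' => Xp (q', p)) q u, v⟫
        = ⟪fderiv ℝ (fun q' => Xp (q', p)) q v, u⟫)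
    (H : EuclideanSpace ℝ (Fin d) × EuclideanSpace ℝ (Fin d) → ℝ)
    (hH : ∀ q p, H (q, p) =
      ∫ l in (0:ℝ)..1, (⟪p, Xq (l • q, l • p)⟫ - ⟪q, Xp (l • q, l • p)⟫)) :
    ∀ q p u v, HasDerivAt (fun t : ℝ => H (q + t • u, p + t • v))
      (⟪v, Xq (q, p)⟫ - ⟪u, Xp (q, p)⟫) 0 := by
  intro q p u v
  have hclosed : ∀ y v w, fderiv ℝ (symplecticOneForm Xq Xp) y v w
      = fderiv ℝ (symplecticOneForm Xq Xp) y w v := fun ⟨a, b⟩ =>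
    fderiv_symplecticOneForm_apply_comm (hXq.differentiable one_ne_zero _)
      (hXp.differentiable one_ne_zero _) (h1 a b) (h2 a b) (h3 a b)
  have hH' : (fun t : ℝ => H (q + t • u, p + t • v))
      = fun t => radialPotential (symplecticOneForm Xq Xp) ((q, p) + t • (u, v)) := by
    ext t
    simp [hH, radialPotential, symplecticOneForm_apply, real_inner_comm]
  rw [hH']
  simpa [symplecticOneForm_apply, real_inner_comm] using
    hasDerivAt_radialPotential_add_smul (contDiff_symplecticOneForm hXq hXp) hclosed (q, p) (u, v)
end
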